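/- Weight-decrease reduction (used in the proof that the skein-relation recursion terminates): let γ = [m; c_1,…,c_l] be a braid representative and let q be an index with 2 ≤ q ≤ l − 1 such that |c_{q−1}| = a, |c_q| = a + 1, and |c_{q+1}| = a for some positive integer a. Let δ = [m; c_1,…,c_{q−2}, −c_q, c_{q−1}, −c_q, c_{q+2},…,c_l] be the braid representative obtained by replacing the three entries (c_{q−1}, c_q, c_{q+1}) with (−c_q, c_{q−1}, −c_q). Then δ is a valid braid representative, w_i(δ) = w_i(γ) for all i < a, w_a(δ) = w_a(γ) − 1, and consequently δ ≺ γ. -/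
import Mathlib



/-- A braid representative `[n; b₁,…,b_k]`: number of strands `n ≥ 1` together with
a finite list of nonzero integers `bⱼ` with `|bⱼ| < n`. -/
structure BraidRep where
  strands : ℕ
  word : List ℤ
  one_le_strands : 1 ≤ strands
  valid : ∀ b ∈ word, b ≠ 0 ∧ b.natAbs < strands

namespace BraidRep

/-- The `m`-th weight of a braid representative: the number of indices with `|bⱼ| = m`. -/
def weight (β : BraidRep) (m : ℕ) : ℕ :=
  (β.word.map Int.natAbs).count m

/-- The `j`-th entry (0-based) of the word of a braid representative (defaulting to `0`). -/
def idx (β : BraidRep) (j : ℕ) : ℤ := β.word.getD j 0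

/-- The order `≺` on braid representatives. -/
def lt (β γ : BraidRep) : Prop :=
  -- (1) fewer indices
  β.word.length < γ.word.length ∨
  -- (2) same number of indices, fewer strands
  (β.word.length = γ.word.length ∧ β.strands < γ.strands) ∨
  -- (3) lexicographically smaller weights
  (β.word.length = γ.word.length ∧ β.strands = γ.strands ∧
    ∃ p, (∀ i < p, β.weight i = γ.weight i) ∧ β.weight p < γ.weight p) ∨
  -- (4) same weights, lexicographically smaller absolute values
  (β.word.length = γ.word.length ∧ β.strands = γ.strands ∧
    (∀ i, β.weight i = γ.weight i) ∧
    ∃ q, (∀ j < q, (β.idx j).natAbs = (γ.idx j).natAbs) ∧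
      (β.idx q).natAbs < (γ.idx q).natAbs) ∨
  -- (5) same absolute values, lexicographically smaller signed entries
  (β.word.length = γ.word.length ∧ β.strands = γ.strands ∧
    (∀ i, β.weight i = γ.weight i) ∧
    (∀ j, (β.idx j).natAbs = (γ.idx j).natAbs) ∧
    ∃ q, (∀ j < q, β.idx j = γ.idx j) ∧ β.idx q < γ.idx q)

end BraidRep

/-- Weight-decrease reduction: if the word of `γ` contains consecutive entries
`c, d, e` with `|c| = a`, `|d| = a + 1`, `|e| = a` (`a ≥ 1`), then replacing them
by `-d, c, -d` yields a valid braid representative `δ` with the same strand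
number which satisfies `wᵢ(δ) = wᵢ(γ)` for `i < a`, `w_a(δ) = w_a(γ) - 1`, and
consequently `δ ≺ γ`. -/
theorem braidRep_weight_decrease (γ : BraidRep) (a : ℕ) (ha : 1 ≤ a)
    (xs ys : List ℤ) (c d e : ℤ) (hw : γ.word = xs ++ c :: d :: e :: ys)
    (hc : c.natAbs = a) (hd : d.natAbs = a + 1) (he : e.natAbs = a) :
    (∀ b ∈ xs ++ (-d) :: c :: (-d) :: ys, b ≠ 0 ∧ b.natAbs < γ.strands) ∧
    ∀ δ : BraidRep, δ.strands = γ.strands → δ.word = xs ++ (-d) :: c :: (-d) :: ys →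
      (∀ i < a, δ.weight i = γ.weight i) ∧ δ.weight a = γ.weight a - 1 ∧
        BraidRep.lt δ γ := by
  have hval := γ.valid
  have hdmem : d ∈ γ.word := by simp [hw]
  have hcmem : c ∈ γ.word := by simp [hw]
  have hd0 : d ≠ 0 := (hval d hdmem).1
  constructor
  · intro b hb
    simp only [List.mem_append, List.mem_cons] at hb
    rcases hb with h | h | h | h | h
    · exact hval b (by simp [hw, h])
    · rw [h]
      exact ⟨neg_ne_zero.mpr hd0, by simpa using (hval d hdmem).2⟩
    · rw [h]; exact hval c hcmem
    · rw [h]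
      exact ⟨neg_ne_zero.mpr hd0, by simpa using (hval d hdmem).2⟩
    · exact hval b (by simp [hw, h])
  · intro δ hs hδw
    have hlen : δ.word.length = γ.word.length := by simp [hw, hδw]
    have hkey : ∀ m, m ≤ a → γ.weight m = δ.weight m + (if a = m then 1 else 0) := by
      intro m hm
      have h2 : ¬ a + 1 = m := by omega
      simp only [BraidRep.weight, hw, hδw, List.map_append, List.map_cons,
        List.count_append, List.count_cons, Int.natAbs_neg, hc, hd, he]
      by_cases h1 : a = m <;> simp [h1, h2] <;> omega
    refine ⟨?_, ?_, ?_⟩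
    · intro i hi
      have := hkey i (by omega)
      have h : ¬ a = i := by omega
      simp [h] at this
      omega
    · have := hkey a le_rfl
      simp at this
      omega
    · refine Or.inr (Or.inr (Or.inl ⟨hlen, hs, a, ?_, ?_⟩))
      · intro i hi
        have := hkey i (by omega)
        have h : ¬ a = i := by omega
        simp [h] at this
        omega
      · have := hkey a le_rfl
        simp at this
        omega
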